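/- Interior sum formula for J^+ derived from Viro's formula: given finite sets of components and double points of K and K' with the described modification (adding a constant b to all winding numbers and indices coming from K', adding one new double point of index b, and dropping the unbounded component of K'), Viro's formula yields J^+(K^×) = J^+(K) + J^+(K') − 2b·rot(K'), where rot(K') = ∑ ω' − ∑ ind'. -/
import Mathlib


/-- Interior sum formula for `J⁺` derived from Viro's formula. -/
theorem interior_sum_Jplus
    {ι ι' κ κ' : Type*} [DecidableEq ι']
    (Γ : Finset ι) (Γ' : Finset ι') (D : Finset κ) (D' : Finset κ')
    (ω : ι → ℤ) (ω' : ι' → ℤ) (ind : κ → ℤ) (ind' : κ' → ℤ)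
    (n n' : ℕ) (hn : n = D.card) (hn' : n' = D'.card)
    (u : ι') (hu : u ∈ Γ') (hωu : ω' u = 0)
    (hΓ' : Γ'.card = n' + 2)
    (b : ℤ)
    (JK JK' rot' Jx : ℤ)
    (hJK : JK = 1 + (n:ℤ) - (∑ C ∈ Γ, (ω C)^2) + (∑ p ∈ D, (ind p)^2))
    (hJK' : JK' = 1 + (n':ℤ) - (∑ C ∈ Γ', (ω' C)^2) + (∑ p ∈ D', (ind' p)^2))
    (hrot : rot' = (∑ C ∈ Γ' \ {u}, ω' C) - (∑ p ∈ D', ind' p))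
    (hJx : Jx = 1 + ((n:ℤ) + n' + 1)
        - ((∑ C ∈ Γ, (ω C)^2) + (∑ C ∈ Γ' \ {u}, (ω' C + b)^2))
        + ((∑ p ∈ D, (ind p)^2) + (∑ p ∈ D', (ind' p + b)^2) + b^2)) :
    Jx = JK + JK' - 2*b*rot' := by
  have hsub : Γ' \ {u} = Γ'.erase u := by
    ext x; simp [Finset.mem_erase, and_comm]
  have hΓ'sq : ∑ C ∈ Γ', (ω' C)^2 = ∑ C ∈ Γ' \ {u}, (ω' C)^2 := by
    rw [hsub, Finset.sum_erase]
    simp [hωu]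
  have hcard : ((Γ' \ {u}).card : ℤ) = (n' : ℤ) + 1 := by
    rw [hsub, Finset.card_erase_of_mem hu, hΓ']
    push_cast
    ring
  have hexp : ∀ (s : Finset ι') (f : ι' → ℤ),
      ∑ C ∈ s, (f C + b)^2 = (∑ C ∈ s, (f C)^2) + 2*b*(∑ C ∈ s, f C) + s.card * b^2 := by
    intro s f
    rw [Finset.sum_congr rfl (fun x _ => by ring :
      ∀ x ∈ s, (f x + b)^2 = (f x)^2 + 2*b*f x + b^2)]
    simp [Finset.sum_add_distrib, Finset.sum_mul, Finset.mul_sum, mul_comm]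
  have hexp' : ∀ (s : Finset κ') (f : κ' → ℤ),
      ∑ p ∈ s, (f p + b)^2 = (∑ p ∈ s, (f p)^2) + 2*b*(∑ p ∈ s, f p) + s.card * b^2 := by
    intro s f
    rw [Finset.sum_congr rfl (fun x _ => by ring :
      ∀ x ∈ s, (f x + b)^2 = (f x)^2 + 2*b*f x + b^2)]
    simp [Finset.sum_add_distrib, Finset.sum_mul, Finset.mul_sum, mul_comm]
  rw [hJx, hJK, hJK', hrot, hΓ'sq, hexp, hexp', hcard, ← hn']
  ring
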